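/- Let T > 0, λ ∈ ℝ, and let a, m, σ, p : [0,T] → ℝ be continuous functions. Suppose x, y : [0,T] → ℝ are differentiable and satisfy x'(t) = (a(t) − m(t)p(t)) x(t) and y'(t) = (a(t) − m(t)p(t) + 2λ σ(t)² p(t)) y(t) for all t ∈ [0,T], with x(0) = y(0). If moreover x(0) ≠ 0, λ ≠ 0, and σ(r)² p(r) > 0 for all r ∈ [0,T], then y(t) ≠ x(t) for every t ∈ (0,T]. -/

import Mathlib

/-!
Both equations are scalar and linear, so `x t = x 0 * exp (∫₀ᵗ (a - m p))` and
`y t = x t * exp (2 λ ∫₀ᵗ σ² p)`. Since `x t ≠ 0`, equality `y t = x t` would force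
`λ ∫₀ᵗ σ² p = 0`, which is impossible when `λ ≠ 0` and `σ² p > 0` on `[0, t]` with `t > 0`.
-/

open Real Set Filter intervalIntegral MeasureTheory

theorem hasDerivWithinAt_integral_Icc {E : Type*} [NormedAddCommGroup E] [NormedSpace ℝ E]
    [CompleteSpace E] {f : ℝ → E} {a b t : ℝ} (hf : ContinuousOn f (Icc a b))
    (ht : t ∈ Icc a b) :
    HasDerivWithinAt (fun u => ∫ s in a..u, f s) (f t) (Icc a b) t :=
  have : Fact (t ∈ Icc a b) := ⟨ht⟩
  integral_hasDerivWithinAt_right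
    ((hf.mono (Icc_subset_Icc_right ht.2)).intervalIntegrable_of_Icc ht.1)
    ⟨Icc a b, self_mem_nhdsWithin, hf.aestronglyMeasurable measurableSet_Icc⟩ (hf t ht)

theorem eq_of_hasDerivWithinAt_zero_Icc {g : ℝ → ℝ} {a b : ℝ}
    (hg : ∀ t ∈ Icc a b, HasDerivWithinAt g 0 (Icc a b) t) : ∀ t ∈ Icc a b, g t = g a :=
  constant_of_has_deriv_right_zero (HasDerivWithinAt.continuousOn hg) fun t ht =>
    (hg t (Ico_subset_Icc_self ht)).mono_of_mem_nhdsWithin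
      (mem_of_superset (Icc_mem_nhdsGE ht.2) (Icc_subset_Icc_left ht.1))

theorem eq_mul_exp_integral_of_hasDerivWithinAt {f x : ℝ → ℝ} {a b : ℝ}
    (hf : ContinuousOn f (Icc a b))
    (hx : ∀ t ∈ Icc a b, HasDerivWithinAt x (f t * x t) (Icc a b) t) {t : ℝ}
    (ht : t ∈ Icc a b) : x t = x a * exp (∫ s in a..t, f s) := by
  have hconst := eq_of_hasDerivWithinAt_zero_Icc (g := fun u => x u * exp (-∫ s in a..u, f s))
    (fun u hu => ((hx u hu).mul (hasDerivWithinAt_integral_Icc hf hu).neg.exp).congr_deriv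
      (by ring)) t ht
  simp only [integral_same, neg_zero, exp_zero, mul_one] at hconst
  rw [← hconst, mul_assoc, ← exp_add, neg_add_cancel, exp_zero, mul_one]

theorem eq_mul_exp_integral_of_hasDerivWithinAt_add {f g x y : ℝ → ℝ} {a b : ℝ}
    (hf : ContinuousOn f (Icc a b)) (hg : ContinuousOn g (Icc a b))
    (hx : ∀ t ∈ Icc a b, HasDerivWithinAt x (f t * x t) (Icc a b) t)
    (hy : ∀ t ∈ Icc a b, HasDerivWithinAt y ((f t + g t) * y t) (Icc a b) t)
    (h0 : x a = y a) {t : ℝ} (ht : t ∈ Icc a b) : y t = x t * exp (∫ s in a..t, g s) := by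
  have hfg : IntervalIntegrable f volume a t ∧ IntervalIntegrable g volume a t :=
    ⟨(hf.mono (Icc_subset_Icc_right ht.2)).intervalIntegrable_of_Icc ht.1,
      (hg.mono (Icc_subset_Icc_right ht.2)).intervalIntegrable_of_Icc ht.1⟩
  rw [eq_mul_exp_integral_of_hasDerivWithinAt (hf.add hg) hy ht,
    eq_mul_exp_integral_of_hasDerivWithinAt hf hx ht, h0, mul_assoc, ← exp_add,
    ← integral_add hfg.1 hfg.2]
  rfl

theorem mean_trajectories_differ_general (T : ℝ) (l : ℝ)
    (a m σ p : ℝ → ℝ)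
    (hac : ContinuousOn a (Icc (0 : ℝ) T))
    (hmc : ContinuousOn m (Icc (0 : ℝ) T))
    (hσc : ContinuousOn σ (Icc (0 : ℝ) T))
    (hpc : ContinuousOn p (Icc (0 : ℝ) T))
    (x y : ℝ → ℝ)
    (hx : ∀ t ∈ Icc (0 : ℝ) T,
      HasDerivWithinAt x ((a t - m t * p t) * x t) (Icc (0 : ℝ) T) t)
    (hy : ∀ t ∈ Icc (0 : ℝ) T,
      HasDerivWithinAt y ((a t - m t * p t + 2 * l * σ t ^ 2 * p t) * y t)
        (Icc (0 : ℝ) T) t)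
    (h0 : x 0 = y 0)
    (hx0 : x 0 ≠ 0) (hl : l ≠ 0)
    (hσp : ∀ r ∈ Icc (0 : ℝ) T, 0 < σ r ^ 2 * p r) :
    ∀ t ∈ Ioc (0 : ℝ) T, y t ≠ x t := by
  intro t ht hyx
  have htI : t ∈ Icc 0 T := Ioc_subset_Icc_self ht
  have hf : ContinuousOn (fun s => a s - m s * p s) (Icc 0 T) := hac.sub (hmc.mul hpc)
  have hq : ContinuousOn (fun s => σ s ^ 2 * p s) (Icc 0 T) := (hσc.pow 2).mul hpc
  have hQ : 0 < ∫ s in 0..t, σ s ^ 2 * p s :=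
    intervalIntegral_pos_of_pos_on
      ((hq.mono (Icc_subset_Icc_right ht.2)).intervalIntegrable_of_Icc ht.1.le)
      (fun s hs => hσp s ⟨hs.1.le, hs.2.le.trans ht.2⟩) ht.1
  have hxt : x t ≠ 0 := by
    rw [eq_mul_exp_integral_of_hasDerivWithinAt hf hx htI]
    exact mul_ne_zero hx0 (exp_pos _).ne'
  have hyt := eq_mul_exp_integral_of_hasDerivWithinAt_add (g := fun s => 2 * l * σ s ^ 2 * p s)
    hf (by fun_prop) hx hy h0 htI
  rw [hyx, left_eq_mul₀ hxt, exp_eq_one_iff] at hyt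
  simp only [mul_assoc, intervalIntegral.integral_const_mul, mul_eq_zero, two_ne_zero, hl,
    false_or] at hyt
  exact hQ.ne' hyt

/-- The mean trajectories of the risk-sensitive and the robust (adversarially)
controlled systems differ on `(0,T]` whenever `λ ≠ 0`, `x(0) ≠ 0` and
`σ² p > 0` on `[0,T]`. -/
theorem mean_trajectories_differ (T : ℝ) (hT : 0 < T) (l : ℝ)
    (a m σ p : ℝ → ℝ)
    (hac : ContinuousOn a (Icc (0 : ℝ) T))
    (hmc : ContinuousOn m (Icc (0 : ℝ) T))
    (hσc : ContinuousOn σ (Icc (0 : ℝ) T))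
    (hpc : ContinuousOn p (Icc (0 : ℝ) T))
    (x y : ℝ → ℝ)
    (hx : ∀ t ∈ Icc (0 : ℝ) T,
      HasDerivWithinAt x ((a t - m t * p t) * x t) (Icc (0 : ℝ) T) t)
    (hy : ∀ t ∈ Icc (0 : ℝ) T,
      HasDerivWithinAt y ((a t - m t * p t + 2 * l * σ t ^ 2 * p t) * y t)
        (Icc (0 : ℝ) T) t)
    (h0 : x 0 = y 0)
    (hx0 : x 0 ≠ 0) (hl : l ≠ 0)
    (hσp : ∀ r ∈ Icc (0 : ℝ) T, 0 < σ r ^ 2 * p r) :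
    ∀ t ∈ Ioc (0 : ℝ) T, y t ≠ x t :=
  mean_trajectories_differ_general T l a m σ p hac hmc hσc hpc x y hx hy h0 hx0 hl hσp
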